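/- Positivity of the discrete density: any solution (ρ_h^n, u_h^n) ∈ X_𝒯 × Y_ℰ of the discrete continuity equation D_t ρ_h^n + div_up[ρ_h^n, u_h^n] − h^α Δ_𝒯 ρ_h^n = 0 of the MAC scheme satisfies ρ_h^n > 0 (i.e. ρ_K^n > 0 for every cell K) provided ρ_h^{n−1} > 0. -/
import Mathlib


open MeasureTheory Finset

namespace MAC

/-- Periodic index set of the uniform grid: cells (and faces) are indexed periodically. -/
abbrev Idx (d N : ℕ) := Fin d → ZMod N

/-- The mesh size `h = 1/N`. -/
noncomputable def hh (N : ℕ) : ℝ := 1 / N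

/-- Shift of a grid index by `k` steps in direction `i`. -/
def shift {d N : ℕ} (K : Idx d N) (i : Fin d) (k : ℤ) : Idx d N :=
  Function.update K i (K i + (k : ZMod N))

/-- Face difference quotient `ð_ℰ^{(i)}` of a cell function, living on faces of direction `i`
(the face indexed by `K` is `σ_{K,i+}`, shared by the cells `K` and `K + e_i`). -/
noncomputable def dE {d N : ℕ} (i : Fin d) (r : Idx d N → ℝ) (K : Idx d N) : ℝ :=
  (r (shift K i 1) - r K) / hh N

/-- Cell difference quotient `ð_𝒯^{(i)}` of a function living on the faces of direction `i`. -/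
noncomputable def dT {d N : ℕ} (i : Fin d) (w : Idx d N → ℝ) (K : Idx d N) : ℝ :=
  (w K - w (shift K i (-1))) / hh N

/-- Discrete divergence `div_h` of a discrete (staggered) velocity field. -/
noncomputable def divh {d N : ℕ} (v : Fin d → Idx d N → ℝ) (K : Idx d N) : ℝ :=
  ∑ i, dT i (v i) K

/-- Cell Laplacian `Δ_𝒯`. -/
noncomputable def lapT {d N : ℕ} (r : Idx d N → ℝ) (K : Idx d N) : ℝ :=
  (∑ i, (r (shift K i 1) - 2 * r K + r (shift K i (-1)))) / (hh N) ^ 2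

/-- Dual (face) Laplacian `Δ_ℰ` acting on a function living on faces of a fixed direction. -/
noncomputable def lapE {d N : ℕ} (w : Idx d N → ℝ) (K : Idx d N) : ℝ :=
  (∑ j, (w (shift K j 1) - 2 * w K + w (shift K j (-1)))) / (hh N) ^ 2

/-- Upwind value `r_σ^{up}` of a cell function at the face `σ_{K,i+}` w.r.t. the velocity `v`. -/
noncomputable def upv {d N : ℕ} (r : Idx d N → ℝ) (v : Fin d → Idx d N → ℝ) (i : Fin d)
    (K : Idx d N) : ℝ :=
  if 0 ≤ v i K then r K else r (shift K i 1)

/-- Upwind flux `Up_i[r,v]`. -/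
noncomputable def Upf {d N : ℕ} (r : Idx d N → ℝ) (v : Fin d → Idx d N → ℝ) (i : Fin d)
    (K : Idx d N) : ℝ :=
  upv r v i K * v i K

/-- Upwind divergence `div_up[r,v]`. -/
noncomputable def divup {d N : ℕ} (r : Idx d N → ℝ) (v : Fin d → Idx d N → ℝ) (K : Idx d N) : ℝ :=
  ∑ i, dT i (Upf r v i) K

/-- Face average `{q}^{(i)}` of a cell function at the face `σ_{K,i+}`. -/
noncomputable def avF {d N : ℕ} (i : Fin d) (q : Idx d N → ℝ) (K : Idx d N) : ℝ :=
  (q K + q (shift K i 1)) / 2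

/-- Cell average of a function living on the faces of direction `i`. -/
noncomputable def avC {d N : ℕ} (i : Fin d) (w : Idx d N → ℝ) (K : Idx d N) : ℝ :=
  (w K + w (shift K i (-1))) / 2

/-- The cell average `ū_j` of component `j` of a discrete velocity. -/
noncomputable def ubar {d N : ℕ} (u : Fin d → Idx d N → ℝ) (j : Fin d) (K : Idx d N) : ℝ :=
  avC j (u j) K

/-- Entry `(j,i)` of the bidual velocity gradient `∇_ε u`. -/
noncomputable def bgrad {d N : ℕ} (u : Fin d → Idx d N → ℝ) (j i : Fin d) (K : Idx d N) : ℝ :=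
  (u i (shift K j 1) - u i K) / hh N

/-- Integral over the torus of a grid function (cellwise or dual-cell-wise constant):
each cell/dual cell has volume `h^d`. -/
noncomputable def intg {d N : ℕ} [NeZero N] (f : Idx d N → ℝ) : ℝ :=
  (hh N) ^ d * ∑ K, f K

/-- The fundamental domain `[0,1)^d` of the flat torus. -/
def box (d : ℕ) : Set (Fin d → ℝ) := Set.univ.pi fun _ => Set.Ico (0 : ℝ) 1

/-- Index of the (periodic) cell containing `x`. -/
noncomputable def cellOf {d : ℕ} (N : ℕ) (x : Fin d → ℝ) : Idx d N :=
  fun j => ((⌊x j * N⌋ : ℤ) : ZMod N)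

/-- Index of the (periodic) dual cell of direction `i` containing `x`. -/
noncomputable def dualOf {d : ℕ} (N : ℕ) (i : Fin d) (x : Fin d → ℝ) : Idx d N :=
  fun j => if j = i then ((⌊x j * N - 1 / 2⌋ : ℤ) : ZMod N) else ((⌊x j * N⌋ : ℤ) : ZMod N)

/-- Index of the (periodic) bidual cell (for the `(j,i)` entry of `∇_ε`) containing `x`. -/
noncomputable def biIdx {d : ℕ} (N : ℕ) (j i : Fin d) (x : Fin d → ℝ) : Idx d N :=
  fun l => ((⌊x l * N - (if l = i then (1 : ℝ) / 2 else 0) -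
      (if l = j then (1 : ℝ) / 2 else 0)⌋ : ℤ) : ZMod N)

/-- Realization of a cell function as a piecewise-constant function on `ℝ^d`. -/
noncomputable def cellFun {d N : ℕ} (r : Idx d N → ℝ) (x : Fin d → ℝ) : ℝ := r (cellOf N x)

/-- Realization of a direction-`i` face function as a piecewise-constant function on `ℝ^d`
(constant on each dual cell). -/
noncomputable def faceFun {d N : ℕ} (i : Fin d) (w : Idx d N → ℝ) (x : Fin d → ℝ) : ℝ :=
  w (dualOf N i x)

/-- Realization of the `(j,i)` entry of `∇_ε u` as a piecewise-constant function on `ℝ^d`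
(constant on each bidual cell). -/
noncomputable def bgFun {d N : ℕ} (u : Fin d → Idx d N → ℝ) (j i : Fin d) (x : Fin d → ℝ) : ℝ :=
  bgrad u j i (biIdx N j i x)

/-- The cell `K ⊂ ℝ^d` (one periodic representative). -/
def cellSet {d N : ℕ} (K : Idx d N) : Set (Fin d → ℝ) :=
  Set.univ.pi fun j => Set.Ico (((K j).val : ℝ) * hh N) ((((K j).val : ℝ) + 1) * hh N)

/-- Cellwise-mean projection `Π_𝒯`. -/
noncomputable def PiT {d N : ℕ} (φ : (Fin d → ℝ) → ℝ) (K : Idx d N) : ℝ :=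
  (N : ℝ) ^ d * ∫ x in cellSet K, φ x

/-- Facewise-mean projection `Π_ℰ^{(i)}` (mean over the face `σ_{K,i+}`). -/
noncomputable def PiE {d N : ℕ} (i : Fin d) (φ : (Fin d → ℝ) → ℝ) (K : Idx d N) : ℝ :=
  (N : ℝ) ^ (d - 1) * ∫ y : {j : Fin d // j ≠ i} → ℝ in
      Set.univ.pi (fun j => Set.Ico (((K j.1).val : ℝ) * hh N) ((((K j.1).val : ℝ) + 1) * hh N)),
    φ (fun l => if hl : l = i then (((K i).val : ℝ) + 1) * hh N else y ⟨l, hl⟩)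

/-- Partial derivative `∂φ/∂x_i`. -/
noncomputable def pd {d : ℕ} (i : Fin d) (f : (Fin d → ℝ) → ℝ) (x : Fin d → ℝ) : ℝ :=
  fderiv ℝ f x (Pi.single i 1)

/-- Space-periodicity (period 1 in each coordinate). -/
def PerS {d : ℕ} (f : (Fin d → ℝ) → ℝ) : Prop :=
  ∀ (j : Fin d) (x : Fin d → ℝ), f (x + Pi.single j 1) = f x

/-- Piecewise-constant-in-time extension of a sequence of objects:
`f_h(t) = f_h^n` for `t ∈ [nΔt, (n+1)Δt)` (and `f_h(t) = f_h^0` for `t < Δt`). -/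
noncomputable def tExt {α : Type*} (Δt : ℝ) (f : ℕ → α) (t : ℝ) : α := f (⌊t / Δt⌋.toNat)

/-- Pressure potential `H(ρ) = ρ∫_1^ρ p(z)/z² dz = a(ρ^γ - ρ)/(γ-1)` for `p(ρ) = aρ^γ`. -/
noncomputable def Hfun (a γ s : ℝ) : ℝ := a * (s ^ γ - s) / (γ - 1)

/-- `H'`. -/
noncomputable def Hd1 (a γ s : ℝ) : ℝ := a * (γ * s ^ (γ - 1) - 1) / (γ - 1)

/-- `H'' (ρ) = p'(ρ)/ρ = aγρ^{γ-2}`. -/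
noncomputable def Hd2 (a γ s : ℝ) : ℝ := a * γ * s ^ (γ - 2)

/-- Relative pressure potential `E(ρ|r) = H(ρ) - H'(r)(ρ - r) - H(r)`. -/
noncomputable def EE (a γ s t : ℝ) : ℝ := Hfun a γ s - Hd1 a γ t * (s - t) - Hfun a γ t

/-- The implicit MAC finite difference scheme (discrete continuity and momentum equations,
with positivity of the discrete density), for time levels `n = 1, …, Nt`. -/
structure IsMACSol {d N : ℕ} (Nt : ℕ) (Δt a γ μ lam α : ℝ)
    (ρ : ℕ → Idx d N → ℝ) (u : ℕ → Fin d → Idx d N → ℝ) : Prop where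
  pos : ∀ n, n ≤ Nt → ∀ K, 0 < ρ n K
  cont : ∀ n, 1 ≤ n → n ≤ Nt → ∀ K,
    (ρ n K - ρ (n - 1) K) / Δt + divup (ρ n) (u n) K - (hh N) ^ α * lapT (ρ n) K = 0
  mom : ∀ n, 1 ≤ n → n ≤ Nt → ∀ (i : Fin d) (K : Idx d N),
    (avF i (fun L => ρ n L * avC i (u n i) L) K
        - avF i (fun L => ρ (n - 1) L * avC i (u (n - 1) i) L) K) / Δt
      + avF i (divup (fun L => ρ n L * avC i (u n i) L) (u n)) K
      + dE i (fun L => a * ρ n L ^ γ) K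
      - μ * lapE (u n i) K - (μ + lam) * dE i (divh (u n)) K
    = (hh N) ^ α *
        ∑ j, avF i (fun L => dT j (fun M => avF j (avC i (u n i)) M * dE j (ρ n) M) L) K

/-- The discrete initial data `(ρ_h^0, ū_h^0) = (Π_𝒯 ρ_0, Π_𝒯 u_0)`. -/
def InitData {d N : ℕ} (ρ0 : (Fin d → ℝ) → ℝ) (u0 : Fin d → (Fin d → ℝ) → ℝ)
    (ρ : ℕ → Idx d N → ℝ) (u : ℕ → Fin d → Idx d N → ℝ) : Prop :=
  (∀ K, ρ 0 K = PiT ρ0 K) ∧ ∀ (i : Fin d) (K : Idx d N), avC i (u 0 i) K = PiT (u0 i) K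

/-- Strong (classical) solution of the compressible Navier–Stokes system on `[0,T]` with
pressure `p(ρ) = aρ^γ` and viscous stress `S = μ(∇u + ∇ᵀu) + λ (div u) I`. -/
def IsStrongSol (d : ℕ) (a γ μ lam T : ℝ)
    (ρ : ℝ → (Fin d → ℝ) → ℝ) (u : ℝ → (Fin d → ℝ) → Fin d → ℝ) : Prop :=
  ∀ t ∈ Set.Icc (0 : ℝ) T, ∀ x : Fin d → ℝ,
    (deriv (fun s => ρ s x) t + ∑ i, pd i (fun y => ρ t y * u t y i) x = 0) ∧
    ∀ j : Fin d,
      deriv (fun s => ρ s x * u s x j) t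
          + ∑ i, pd i (fun y => ρ t y * u t y i * u t y j) x
          + pd j (fun y => a * ρ t y ^ γ) x
        = ∑ i, pd i (fun y =>
            μ * (pd i (fun z => u t z j) y + pd j (fun z => u t z i) y)
            + (if i = j then lam * ∑ k, pd k (fun z => u t z k) y else 0)) x


lemma shift_shift {d N : ℕ} (K : Idx d N) (i : Fin d) (k m : ℤ) :
    shift (shift K i k) i m = shift K i (k + m) := by
  unfold shift
  rw [Function.update_self, Function.update_idem]
  push_cast
  ring_nf

lemma shift_zero {d N : ℕ} (K : Idx d N) (i : Fin d) : shift K i 0 = K := by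
  unfold shift
  simp

/-- Shift as an equivalence. -/
def shiftEquiv {d N : ℕ} (i : Fin d) (k : ℤ) : Idx d N ≃ Idx d N where
  toFun K := shift K i k
  invFun K := shift K i (-k)
  left_inv K := by
    show shift (shift K i k) i (-k) = K
    rw [shift_shift, add_neg_cancel, shift_zero]
  right_inv K := by
    show shift (shift K i (-k)) i k = K
    rw [shift_shift, neg_add_cancel, shift_zero]

@[simp] lemma shiftEquiv_apply {d N : ℕ} (i : Fin d) (k : ℤ) (K : Idx d N) :
    shiftEquiv i k K = shift K i k := rfl

@[simp] lemma shiftEquiv_symm_apply {d N : ℕ} (i : Fin d) (k : ℤ) (K : Idx d N) :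
    (shiftEquiv i k).symm K = shift K i (-k) := rfl

lemma sum_le_sum_comp {ι : Type*} [DecidableEq ι] (g : ι ≃ ι) (S : Finset ι)
    (w : ι → ℝ)
    (hA : ∀ K, K ∈ S → g.symm K ∉ S → w K ≤ 0)
    (hB : ∀ K, K ∉ S → g.symm K ∈ S → 0 ≤ w K) :
    ∑ K ∈ S, w K ≤ ∑ K ∈ S, w (g K) := by
  have himg : ∀ K, K ∈ S.image g ↔ g.symm K ∈ S := by
    intro K
    simp only [Finset.mem_image]
    constructor
    · rintro ⟨a, ha, rfl⟩; simpa using ha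
    · intro h; exact ⟨g.symm K, h, by simp⟩
  have heq2 : ∑ K ∈ S, w (g K) = ∑ K ∈ S.image g, w K :=
    (Finset.sum_image (fun a _ b _ h => g.injective h)).symm
  rw [heq2]
  have h1 : ∑ K ∈ S \ S.image g, w K ≤ 0 :=
    Finset.sum_nonpos fun K hK => by
      rw [Finset.mem_sdiff] at hK
      exact hA K hK.1 (fun h => hK.2 ((himg K).mpr h))
  have h2 : 0 ≤ ∑ K ∈ S.image g \ S, w K :=
    Finset.sum_nonneg fun K hK => by
      rw [Finset.mem_sdiff] at hK
      exact hB K hK.2 ((himg K).mp hK.1)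
  have key := Finset.sum_sdiff_sub_sum_sdiff (s₁ := S) (s₂ := S.image ⇑g) (f := w)
  linarith

/-- positivity of the discrete density: any solution of the discrete
continuity equation `D_t ρ_h^n + div_up[ρ_h^n, u_h^n] − h^α Δ_𝒯 ρ_h^n = 0` of the MAC scheme
satisfies `ρ_h^n > 0` provided `ρ_h^{n−1} > 0`. -/
theorem discrete_density_positive
    (d N : ℕ) (hd : d = 2 ∨ d = 3) (hN : 0 < N)
    (Δt α : ℝ) (hΔt : 0 < Δt) (hα : 1 < α)
    (ρprev ρ : Idx d N → ℝ) (u : Fin d → Idx d N → ℝ)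
    (hpos : ∀ K, 0 < ρprev K)
    (heq : ∀ K, (ρ K - ρprev K) / Δt + divup ρ u K - (hh N) ^ α * lapT ρ K = 0) :
    ∀ K, 0 < ρ K := by
  classical
  haveI : NeZero N := ⟨hN.ne'⟩
  by_contra hcon
  push_neg at hcon
  obtain ⟨K₀, hK₀⟩ := hcon
  have hh_pos : (0 : ℝ) < hh N := by
    unfold hh
    have : (0 : ℝ) < (N : ℝ) := by exact_mod_cast hN
    positivity
  set S : Finset (Idx d N) := Finset.univ.filter (fun K => ρ K ≤ 0) with hS
  have hmemS : ∀ K, K ∈ S ↔ ρ K ≤ 0 := by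
    intro K; simp [hS]
  have hSne : S.Nonempty := ⟨K₀, (hmemS K₀).mpr hK₀⟩
  -- sum the scheme over S
  have hsum : ∑ K ∈ S, ((ρ K - ρprev K) / Δt + divup ρ u K - (hh N) ^ α * lapT ρ K) = 0 :=
    Finset.sum_eq_zero fun K _ => heq K
  have hsplit : ∑ K ∈ S, ((ρ K - ρprev K) / Δt + divup ρ u K - (hh N) ^ α * lapT ρ K)
      = (∑ K ∈ S, (ρ K - ρprev K) / Δt) + (∑ K ∈ S, divup ρ u K)
        - (hh N) ^ α * ∑ K ∈ S, lapT ρ K := by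
    rw [Finset.sum_sub_distrib, Finset.sum_add_distrib, ← Finset.mul_sum]
  -- first term is strictly negative
  have h1 : ∑ K ∈ S, (ρ K - ρprev K) / Δt < 0 := by
    have : ∑ K ∈ S, (ρ K - ρprev K) / Δt < ∑ K ∈ S, (0 : ℝ) := by
      refine Finset.sum_lt_sum_of_nonempty hSne ?_
      intro K hK
      have hρK := (hmemS K).mp hK
      have := hpos K
      apply div_neg_of_neg_of_pos _ hΔt
      linarith
    simpa using this
  -- the upwind divergence sums to a nonpositive quantity on S
  have h2 : ∑ K ∈ S, divup ρ u K ≤ 0 := by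
    unfold divup
    rw [Finset.sum_comm]
    refine Finset.sum_nonpos fun i _ => ?_
    unfold dT
    have hle : ∑ K ∈ S, Upf ρ u i K ≤ ∑ K ∈ S, Upf ρ u i (shift K i (-1)) := by
      have := sum_le_sum_comp (shiftEquiv i (-1)) S (Upf ρ u i) ?_ ?_
      · simpa using this
      · intro K hK hK2
        simp only [shiftEquiv_symm_apply, neg_neg] at hK2
        have hρK := (hmemS K).mp hK
        have hρS : 0 < ρ (shift K i 1) := by
          by_contra hc
          exact hK2 ((hmemS _).mpr (le_of_not_gt hc))
        unfold Upf upv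
        by_cases hu : 0 ≤ u i K
        · rw [if_pos hu]; exact mul_nonpos_of_nonpos_of_nonneg hρK hu
        · rw [if_neg hu]
          exact le_of_lt (mul_neg_of_pos_of_neg hρS (lt_of_not_ge hu))
      · intro K hK hK2
        simp only [shiftEquiv_symm_apply, neg_neg] at hK2
        have hρK : 0 < ρ K := lt_of_not_ge fun h => hK ((hmemS K).mpr h)
        have hρS : ρ (shift K i 1) ≤ 0 := (hmemS _).mp hK2
        unfold Upf upv
        by_cases hu : 0 ≤ u i K
        · rw [if_pos hu]; exact mul_nonneg hρK.le hu
        · rw [if_neg hu]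
          have := lt_of_not_ge hu
          nlinarith
    have : ∑ K ∈ S, (Upf ρ u i K - Upf ρ u i (shift K i (-1))) / hh N
        = (∑ K ∈ S, Upf ρ u i K - ∑ K ∈ S, Upf ρ u i (shift K i (-1))) / hh N := by
      rw [← Finset.sum_div, Finset.sum_sub_distrib]
    rw [this]
    apply div_nonpos_of_nonpos_of_nonneg _ hh_pos.le
    linarith
  -- the Laplacian sums to a nonnegative quantity on S
  have h3 : 0 ≤ ∑ K ∈ S, lapT ρ K := by
    unfold lapT
    rw [← Finset.sum_div]
    apply div_nonneg _ (by positivity)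
    rw [Finset.sum_comm]
    refine Finset.sum_nonneg fun i _ => ?_
    have a1 : ∑ K ∈ S, ρ K ≤ ∑ K ∈ S, ρ (shift K i 1) := by
      have := sum_le_sum_comp (shiftEquiv i 1) S ρ
        (fun K hK _ => (hmemS K).mp hK)
        (fun K hK _ => (lt_of_not_ge fun h => hK ((hmemS K).mpr h)).le)
      simpa using this
    have a2 : ∑ K ∈ S, ρ K ≤ ∑ K ∈ S, ρ (shift K i (-1)) := by
      have := sum_le_sum_comp (shiftEquiv i (-1)) S ρ
        (fun K hK _ => (hmemS K).mp hK)
        (fun K hK _ => (lt_of_not_ge fun h => hK ((hmemS K).mpr h)).le)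
      simpa using this
    have e : ∑ K ∈ S, (ρ (shift K i 1) - 2 * ρ K + ρ (shift K i (-1)))
        = (∑ K ∈ S, ρ (shift K i 1)) - 2 * ∑ K ∈ S, ρ K + ∑ K ∈ S, ρ (shift K i (-1)) := by
      rw [Finset.sum_add_distrib, Finset.sum_sub_distrib, ← Finset.mul_sum]
    rw [e]
    linarith
  have hpow : (0 : ℝ) ≤ (hh N) ^ α := Real.rpow_nonneg hh_pos.le α
  rw [hsplit] at hsum
  nlinarith [mul_nonneg hpow h3]

end MAC
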